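/- Let λ ∈ (0,1] be a real number and k ≥ 0 a fixed integer. Let (n_j) and (M_j) be sequences of positive integers with k ≤ n_j ≤ M_j for all j, both tending to infinity, such that n_j/M_j → λ as j → ∞, and for each j let 𝓝_j be a subset of size n_j of a set 𝓜_j of size M_j. Then the second moments about the limiting mean, M₂(k;M_j,n_j) := (1/M_j^{n_j}) Σ_{x ∈ 𝓜_j^{n_j}} ( m_k(x)/n_j − (λ^k/k!)·e^{−λ} )², converge to 0 as j → ∞. -/

import Mathlib

/-!
Write `m_k(x) = ∑_{y ∈ 𝓝} [y occurs exactly k times in x]` and average over the `M^n` tuples.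
A fixed `y` occurs exactly `k` times in `C(n,k) (M-1)^(n-k)` tuples, and two distinct `y ≠ y'`
both do in `C(n,k) C(n-k,k) (M-2)^(n-2k)` tuples. Divided by `M^n`, these two counts `P` and `Q`
tend to the Poisson values `c = λ^k e^{-λ} / k!` and `c²`. Hence the mean of `m_k/n` (which is
`P`) tends to `c` and its mean square `P/n + (1 - 1/n) Q` tends to `c²`, so the second moment
about `c` tends to `c² - 2c·c + c² = 0`.
-/

open Finset

lemma fiber_subset_compl_fiber {α β : Type*} [Fintype α] [DecidableEq α] [DecidableEq β]
    {y y' : β} (hy : y ≠ y') (x : α → β) :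
    ({i | x i = y'} : Finset α) ⊆ ({i | x i = y} : Finset α)ᶜ := fun i hi => by
  rw [mem_filter] at hi
  rw [mem_compl, mem_filter]
  exact fun h => hy (h.2.symm.trans hi.2)

section Counting

variable {α β : Type*} [Fintype α] [DecidableEq α] [Fintype β] [DecidableEq β]

lemma filter_fiber_eq_eq_piFinset (y : β) (S : Finset α) :
    ({x | ({i | x i = y} : Finset α) = S} : Finset (α → β)) =
      Fintype.piFinset fun i => if i ∈ S then {y} else {y}ᶜ := by
  ext x
  simp only [mem_filter, mem_univ, true_and, Fintype.mem_piFinset, Finset.ext_iff]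
  refine forall_congr' fun i => ?_
  split_ifs with hi <;> simp [hi]

lemma card_filter_fiber_eq (y : β) (S : Finset α) :
    #{x : α → β | ({i | x i = y} : Finset α) = S} =
      (Fintype.card β - 1) ^ (Fintype.card α - #S) := by
  rw [filter_fiber_eq_eq_piFinset, Fintype.card_piFinset]
  simp only [apply_ite Finset.card, card_singleton, card_compl, prod_ite, prod_const_one, one_mul,
    prod_const, filter_not, filter_mem_eq_inter, univ_inter, card_sdiff_of_subset (subset_univ S),
    card_univ]

lemma filter_fiber_eq_and_fiber_eq_eq_piFinset {y y' : β} (hy : y ≠ y') {S T : Finset α}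
    (hST : Disjoint S T) :
    ({x | ({i | x i = y} : Finset α) = S ∧ ({i | x i = y'} : Finset α) = T} : Finset (α → β)) =
      Fintype.piFinset fun i => if i ∈ S then {y} else if i ∈ T then {y'} else {y, y'}ᶜ := by
  ext x
  simp only [mem_filter, mem_univ, true_and, Fintype.mem_piFinset, Finset.ext_iff, ← forall_and]
  refine forall_congr' fun i => ?_
  have hST' : i ∈ S → i ∉ T := fun h => disjoint_left.1 hST h
  split_ifs with hS hT <;> aesop

lemma card_filter_fiber_eq_and_fiber_eq {y y' : β} (hy : y ≠ y') {S T : Finset α}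
    (hST : Disjoint S T) :
    #{x : α → β | ({i | x i = y} : Finset α) = S ∧ ({i | x i = y'} : Finset α) = T} =
      (Fintype.card β - 2) ^ (Fintype.card α - (#S + #T)) := by
  rw [filter_fiber_eq_and_fiber_eq_eq_piFinset hy hST, Fintype.card_piFinset]
  have hcard : ∀ i, #(if i ∈ S then {y} else if i ∈ T then {y'} else ({y, y'}ᶜ : Finset β)) =
      if i ∈ S ∪ T then 1 else Fintype.card β - 2 := fun i => by
    split_ifs <;> simp_all [card_compl, Nat.sub_sub]
  simp only [hcard, prod_ite, prod_const_one, one_mul, prod_const, filter_not, filter_mem_eq_inter,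
    univ_inter, card_sdiff_of_subset (subset_univ _), card_univ, card_union_of_disjoint hST]

lemma card_filter_card_fiber_eq (y : β) (k : ℕ) :
    #{x : α → β | #{i | x i = y} = k} =
      (Fintype.card α).choose k * (Fintype.card β - 1) ^ (Fintype.card α - k) := by
  rw [card_eq_sum_card_fiberwise (f := fun x => ({i | x i = y} : Finset α))
    (t := powersetCard k univ) fun x hx => by simpa using hx]
  rw [sum_congr rfl fun S hS => ?_, sum_const, card_powersetCard, card_univ, smul_eq_mul]
  rw [filter_filter, ← (mem_powersetCard.1 hS).2, ← card_filter_fiber_eq y S]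
  exact congrArg _ <| filter_congr fun x _ => and_iff_right_of_imp fun h => by rw [h]

lemma card_filter_card_fiber_eq_and_card_fiber_eq {y y' : β} (hy : y ≠ y') (k : ℕ) :
    #{x : α → β | #{i | x i = y} = k ∧ #{i | x i = y'} = k} =
      (Fintype.card α).choose k * ((Fintype.card α - k).choose k *
        (Fintype.card β - 2) ^ (Fintype.card α - 2 * k)) := by
  rw [card_eq_sum_card_fiberwise (f := fun x => ({i | x i = y} : Finset α))
    (t := powersetCard k univ) fun x hx => by simp_all]
  rw [sum_congr rfl fun S hS => ?_, sum_const, card_powersetCard, card_univ, smul_eq_mul]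
  obtain ⟨-, hSk⟩ := mem_powersetCard.1 hS
  rw [card_eq_sum_card_fiberwise (f := fun x => ({i | x i = y'} : Finset α))
    (t := powersetCard k Sᶜ) fun x hx => ?_]
  · rw [sum_congr rfl fun T hT => ?_, sum_const, card_powersetCard, card_compl, hSk, smul_eq_mul]
    obtain ⟨hTS, hTk⟩ := mem_powersetCard.1 hT
    have hcount := card_filter_fiber_eq_and_fiber_eq (α := α) hy
      (disjoint_left.2 fun i hS hT => mem_compl.1 (hTS hT) hS)
    rw [hSk, hTk, ← two_mul] at hcount
    rw [filter_filter, filter_filter, ← hcount]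
    refine congrArg _ <| filter_congr fun x _ => and_iff_right_of_imp ?_
    rintro ⟨hf, hg⟩
    rw [hf, hg]
    exact ⟨hSk, hTk⟩
  · simp only [coe_filter, Set.mem_ofPred_eq, mem_filter, mem_univ, true_and] at hx
    obtain ⟨⟨-, hk'⟩, hf⟩ := hx
    exact mem_powersetCard.2 ⟨hf ▸ fiber_subset_compl_fiber hy x, hk'⟩

lemma sum_card_filter_card_fiber_eq (N : Finset β) (k : ℕ) :
    ∑ x : α → β, #{y ∈ N | #{i | x i = y} = k} =
      #N * ((Fintype.card α).choose k * (Fintype.card β - 1) ^ (Fintype.card α - k)) := by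
  have hswap := sum_card_bipartiteAbove_eq_sum_card_bipartiteBelow (s := univ) (t := N)
    (r := fun (x : α → β) y => #{i | x i = y} = k)
  simp only [bipartiteAbove, bipartiteBelow] at hswap
  rw [hswap, sum_const_nat fun y _ => card_filter_card_fiber_eq y k]

lemma sum_sq_card_filter_card_fiber_eq (N : Finset β) (k : ℕ) :
    ∑ x : α → β, #{y ∈ N | #{i | x i = y} = k} ^ 2 =
      #N * ((Fintype.card α).choose k * (Fintype.card β - 1) ^ (Fintype.card α - k)) +
      (#N * #N - #N) * ((Fintype.card α).choose k * ((Fintype.card α - k).choose k *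
        (Fintype.card β - 2) ^ (Fintype.card α - 2 * k))) := by
  have hsq : ∀ x : α → β, #{y ∈ N | #{i | x i = y} = k} ^ 2 =
      #{p ∈ N ×ˢ N | #{i | x i = p.1} = k ∧ #{i | x i = p.2} = k} := fun x => by
    rw [filter_product (fun y => #{i | x i = y} = k) (fun y => #{i | x i = y} = k),
      card_product, sq]
  have hswap := sum_card_bipartiteAbove_eq_sum_card_bipartiteBelow (s := univ) (t := N ×ˢ N)
    (r := fun (x : α → β) p => #{i | x i = p.1} = k ∧ #{i | x i = p.2} = k)
  simp only [bipartiteAbove, bipartiteBelow] at hswap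
  rw [sum_congr rfl fun x _ => hsq x, hswap, ← diag_union_offDiag,
    sum_union (disjoint_diag_offDiag N), ← offDiag_card, sum_const_nat fun p hp => ?_,
    sum_const_nat fun p hp => ?_, diag_card]
  · obtain ⟨-, -, hp⟩ := mem_offDiag.1 hp
    exact card_filter_card_fiber_eq_and_card_fiber_eq hp k
  · rw [(mem_diag.1 hp).2]
    simp only [and_self]
    exact card_filter_card_fiber_eq _ k

end Counting

lemma mul_sum_sub_sq {ι : Type*} (s : Finset ι) (f : ι → ℝ) (c : ℝ) {w : ℝ} (hw : w * #s = 1) :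
    w * ∑ i ∈ s, (f i - c) ^ 2 = w * ∑ i ∈ s, f i ^ 2 - 2 * c * (w * ∑ i ∈ s, f i) + c ^ 2 := by
  simp only [sub_sq, sum_add_distrib, sum_sub_distrib, sum_const, nsmul_eq_mul, ← sum_mul,
    ← mul_sum]
  linear_combination c ^ 2 * hw

lemma average_card_filter_div_eq {n M : ℕ} (hn : n ≠ 0) (N : Finset (Fin M)) (hN : #N = n)
    (k : ℕ) :
    1 / (M : ℝ) ^ n * ∑ x : Fin n → Fin M, (#{y ∈ N | #{i | x i = y} = k} : ℝ) / n =
      ((n.choose k * (M - 1) ^ (n - k) : ℕ) : ℝ) / (M : ℝ) ^ n := by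
  rw [← sum_div, ← Nat.cast_sum, sum_card_filter_card_fiber_eq, hN]
  simp only [Fintype.card_fin, Nat.cast_mul]
  field_simp

lemma average_sq_card_filter_div_eq {n M : ℕ} (hn : n ≠ 0) (N : Finset (Fin M)) (hN : #N = n)
    (k : ℕ) :
    1 / (M : ℝ) ^ n * ∑ x : Fin n → Fin M, ((#{y ∈ N | #{i | x i = y} = k} : ℝ) / n) ^ 2 =
      1 / n * (((n.choose k * (M - 1) ^ (n - k) : ℕ) : ℝ) / (M : ℝ) ^ n) +
      (1 - 1 / n) * (((n.choose k * ((n - k).choose k * (M - 2) ^ (n - 2 * k)) : ℕ) : ℝ) /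
        (M : ℝ) ^ n) := by
  have hsum := congrArg (Nat.cast : ℕ → ℝ) (sum_sq_card_filter_card_fiber_eq (α := Fin n) N k)
  rw [hN] at hsum
  push_cast [Fintype.card_fin, Nat.cast_sub (Nat.le_mul_self n)] at hsum
  simp only [div_pow]
  rw [← sum_div, hsum]
  push_cast
  field_simp

lemma natCast_choose_mul_sub_pow_div_pow (a k : ℕ) {M r : ℕ} (hrM : r ≤ M) (hM : 0 < M) :
    ((a.choose k * (M - r) ^ (a - k) : ℕ) : ℝ) / (M : ℝ) ^ a =
      (a.choose k : ℝ) / M ^ k * (1 - r / M) ^ (a - k) := by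
  rcases lt_or_ge a k with hak | hka
  · simp [Nat.choose_eq_zero_of_lt hak]
  have hM' : (M : ℝ) ≠ 0 := by positivity
  rw [one_sub_div hM', div_pow, ← Nat.add_sub_cancel' hka, pow_add]
  push_cast [hrM]
  rw [Nat.add_sub_cancel_left]
  field_simp

lemma natCast_choose_mul_choose_mul_pow_div_pow (n k M : ℕ) :
    ((n.choose k * ((n - k).choose k * (M - 2) ^ (n - 2 * k)) : ℕ) : ℝ) / (M : ℝ) ^ n =
      (n.choose k : ℝ) / M ^ k *
        ((((n - k).choose k * (M - 2) ^ (n - k - k) : ℕ) : ℝ) / (M : ℝ) ^ (n - k)) := by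
  rcases lt_or_ge n k with hnk | hkn
  · simp [Nat.choose_eq_zero_of_lt hnk]
  rw [Nat.sub_sub, ← two_mul, Nat.cast_mul, ← mul_div_mul_comm, ← pow_add,
    Nat.add_sub_cancel' hkn]

open Filter
open scoped Nat

section Asymptotics

open Topology

variable {ι : Type*} {l : Filter ι} {a M : ι → ℕ} {lam : ℝ}

lemma tendsto_natCast_sub_div (ha : Tendsto (fun j => (a j : ℝ) / M j) l (𝓝 lam))
    (hM : Tendsto M l atTop) (d : ℕ) :
    Tendsto (fun j => ((a j - d : ℕ) : ℝ) / M j) l (𝓝 lam) := by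
  have hd : Tendsto (fun j => (a j : ℝ) / M j - d / M j) l (𝓝 lam) := by
    simpa using ha.sub (tendsto_const_nhds.div_atTop (tendsto_natCast_atTop_atTop.comp hM))
  -- squeezing also covers the truncated case `a j < d`
  refine tendsto_of_tendsto_of_tendsto_of_le_of_le hd ha (fun j => ?_) fun j => ?_
  · rw [← sub_div]
    gcongr
    rw [sub_le_iff_le_add, ← Nat.cast_add]
    exact Nat.cast_le.2 le_tsub_add
  · gcongr
    exact_mod_cast Nat.sub_le (a j) d

lemma tendsto_choose_div_pow (ha : Tendsto (fun j => (a j : ℝ) / M j) l (𝓝 lam))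
    (hM : Tendsto M l atTop) (k : ℕ) :
    Tendsto (fun j => ((a j).choose k : ℝ) / M j ^ k) l (𝓝 (lam ^ k / k !)) := by
  have hdesc : Tendsto (fun j => ∏ i ∈ range k, ((a j - i : ℕ) : ℝ) / M j) l (𝓝 (lam ^ k)) := by
    simpa using tendsto_finsetProd (range k) fun i _ => tendsto_natCast_sub_div ha hM i
  refine (hdesc.div_const (k ! : ℝ)).congr fun j => ?_
  rw [prod_div_distrib, prod_const, card_range, ← Nat.cast_prod, ← Nat.descFactorial_eq_prod_range,
    Nat.descFactorial_eq_factorial_mul_choose, Nat.cast_mul]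
  field_simp

lemma tendsto_one_sub_div_pow (ha : Tendsto (fun j => (a j : ℝ) / M j) l (𝓝 lam))
    (hM : Tendsto M l atTop) (r : ℝ) :
    Tendsto (fun j => (1 - r / M j) ^ a j) l (𝓝 (Real.exp (-(lam * r)))) := by
  have hMr : Tendsto (fun j => (M j : ℝ)) l atTop := tendsto_natCast_atTop_atTop.comp hM
  have hexp : Tendsto (fun j => (1 - r / M j) ^ M j) l (𝓝 (Real.exp (-r))) := by
    simpa [Function.comp_def, sub_eq_add_neg, neg_div] using
      (Real.tendsto_one_add_div_pow_exp (-r)).comp hM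
  have hrpow := hexp.rpow ha (Or.inl (Real.exp_ne_zero _))
  rw [← Real.exp_mul, neg_mul, mul_comm] at hrpow
  refine hrpow.congr' ?_
  filter_upwards [hMr.eventually_gt_atTop r, hMr.eventually_gt_atTop 0] with j hrM hM0
  have hbase : 0 ≤ 1 - r / M j := by rw [sub_nonneg, div_le_one hM0]; exact hrM.le
  rw [← Real.rpow_natCast, ← Real.rpow_mul hbase, mul_div_cancel₀ _ hM0.ne', Real.rpow_natCast]

lemma tendsto_choose_mul_sub_pow_div_pow (ha : Tendsto (fun j => (a j : ℝ) / M j) l (𝓝 lam))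
    (hM : Tendsto M l atTop) (k r : ℕ) :
    Tendsto (fun j => (((a j).choose k * (M j - r) ^ (a j - k) : ℕ) : ℝ) / (M j : ℝ) ^ a j) l
      (𝓝 (lam ^ k / k ! * Real.exp (-(lam * r)))) := by
  refine ((tendsto_choose_div_pow ha hM k).mul
    (tendsto_one_sub_div_pow (tendsto_natCast_sub_div ha hM k) hM r)).congr' ?_
  filter_upwards [hM.eventually_ge_atTop r, hM.eventually_gt_atTop 0] with j hrM hM0
  rw [natCast_choose_mul_sub_pow_div_pow _ _ hrM hM0]

lemma tendsto_choose_mul_choose_mul_pow_div_pow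
    (ha : Tendsto (fun j => (a j : ℝ) / M j) l (𝓝 lam)) (hM : Tendsto M l atTop) (k : ℕ) :
    Tendsto (fun j =>
        (((a j).choose k * ((a j - k).choose k * (M j - 2) ^ (a j - 2 * k)) : ℕ) : ℝ) /
          (M j : ℝ) ^ a j) l (𝓝 ((lam ^ k / k ! * Real.exp (-lam)) ^ 2)) := by
  have h := (tendsto_choose_div_pow ha hM k).mul
    (tendsto_choose_mul_sub_pow_div_pow (tendsto_natCast_sub_div ha hM k) hM k 2)
  simp only [← natCast_choose_mul_choose_mul_pow_div_pow] at h
  convert h using 2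
  rw [mul_pow, ← Real.exp_nat_mul]
  push_cast
  ring_nf

variable {n : ι → ℕ}

lemma tendsto_average_card_filter_div (hn : Tendsto n l atTop) (hM : Tendsto M l atTop)
    (hratio : Tendsto (fun j => (n j : ℝ) / M j) l (𝓝 lam))
    (N : ∀ j, Finset (Fin (M j))) (hN : ∀ j, #(N j) = n j) (k : ℕ) :
    Tendsto (fun j => 1 / (M j : ℝ) ^ n j *
        ∑ x : Fin (n j) → Fin (M j), (#{y ∈ N j | #{i | x i = y} = k} : ℝ) / n j)
      l (𝓝 (lam ^ k / k ! * Real.exp (-lam))) := by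
  have h := tendsto_choose_mul_sub_pow_div_pow hratio hM k 1
  rw [Nat.cast_one, mul_one] at h
  refine h.congr' ?_
  filter_upwards [hn.eventually_ne_atTop 0] with j hj
  rw [average_card_filter_div_eq hj _ (hN j)]

lemma tendsto_average_sq_card_filter_div (hn : Tendsto n l atTop) (hM : Tendsto M l atTop)
    (hratio : Tendsto (fun j => (n j : ℝ) / M j) l (𝓝 lam))
    (N : ∀ j, Finset (Fin (M j))) (hN : ∀ j, #(N j) = n j) (k : ℕ) :
    Tendsto (fun j => 1 / (M j : ℝ) ^ n j *
        ∑ x : Fin (n j) → Fin (M j), ((#{y ∈ N j | #{i | x i = y} = k} : ℝ) / n j) ^ 2)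
      l (𝓝 ((lam ^ k / k ! * Real.exp (-lam)) ^ 2)) := by
  have hinv : Tendsto (fun j => 1 / (n j : ℝ)) l (𝓝 0) :=
    tendsto_const_nhds.div_atTop (tendsto_natCast_atTop_atTop.comp hn)
  have h := (hinv.mul (tendsto_choose_mul_sub_pow_div_pow hratio hM k 1)).add
    (((tendsto_const_nhds (x := (1 : ℝ))).sub hinv).mul
      (tendsto_choose_mul_choose_mul_pow_div_pow hratio hM k))
  rw [zero_mul, zero_add, sub_zero, one_mul] at h
  refine h.congr' ?_
  filter_upwards [hn.eventually_ne_atTop 0] with j hj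
  rw [average_sq_card_filter_div_eq hj _ (hN j)]

end Asymptotics

theorem second_moment_tendsto_zero_general (lam : ℝ) (k : ℕ)
    (n M : ℕ → ℕ)
    (hn : Tendsto n atTop atTop) (hM : Tendsto M atTop atTop)
    (hratio : Tendsto (fun j => (n j : ℝ) / (M j : ℝ)) atTop (nhds lam))
    (𝓝 : ∀ j, Finset (Fin (M j))) (h𝓝 : ∀ j, (𝓝 j).card = n j) :
    Tendsto (fun j =>
        (1 / (M j : ℝ) ^ (n j)) * ∑ x : Fin (n j) → Fin (M j),
          (((((𝓝 j).filter (fun y =>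
              (Finset.univ.filter (fun i : Fin (n j) => x i = y)).card = k)).card : ℝ)
            / (n j : ℝ)) - lam ^ k / (k.factorial : ℝ) * Real.exp (-lam)) ^ 2)
      atTop (nhds 0) := by
  set c := lam ^ k / (k.factorial : ℝ) * Real.exp (-lam)
  have hmean := tendsto_average_card_filter_div hn hM hratio 𝓝 h𝓝 k
  have hsq := tendsto_average_sq_card_filter_div hn hM hratio 𝓝 h𝓝 k
  have h := (hsq.sub (hmean.const_mul (2 * c))).add_const (c ^ 2)
  rw [show c ^ 2 - 2 * c * c + c ^ 2 = 0 by ring] at h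
  refine h.congr' ?_
  filter_upwards [hM.eventually_gt_atTop 0] with j hj
  refine (mul_sum_sub_sq _ _ c ?_).symm
  rw [card_univ, Fintype.card_fun, Fintype.card_fin, Fintype.card_fin, Nat.cast_pow]
  field_simp

/-- If `n_j/M_j → λ ∈ (0,1]` with `k ≤ n_j ≤ M_j` and both `n_j, M_j → ∞`, then the second
moments about the limiting mean,
`M₂(k;M_j,n_j) = (1/M_j^{n_j}) Σ_x (m_k(x)/n_j − (λ^k/k!) e^{−λ})²`, converge to `0`. -/
theorem second_moment_tendsto_zero (lam : ℝ) (hlam0 : 0 < lam) (hlam1 : lam ≤ 1) (k : ℕ)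
    (n M : ℕ → ℕ) (hnpos : ∀ j, 0 < n j) (hMpos : ∀ j, 0 < M j)
    (hk : ∀ j, k ≤ n j) (hnM : ∀ j, n j ≤ M j)
    (hn : Tendsto n atTop atTop) (hM : Tendsto M atTop atTop)
    (hratio : Tendsto (fun j => (n j : ℝ) / (M j : ℝ)) atTop (nhds lam))
    (𝓝 : ∀ j, Finset (Fin (M j))) (h𝓝 : ∀ j, (𝓝 j).card = n j) :
    Tendsto (fun j =>
        (1 / (M j : ℝ) ^ (n j)) * ∑ x : Fin (n j) → Fin (M j),
          (((((𝓝 j).filter (fun y =>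
              (Finset.univ.filter (fun i : Fin (n j) => x i = y)).card = k)).card : ℝ)
            / (n j : ℝ)) - lam ^ k / (k.factorial : ℝ) * Real.exp (-lam)) ^ 2)
      atTop (nhds 0) :=
  second_moment_tendsto_zero_general lam k n M hn hM hratio 𝓝 h𝓝
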